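/- arXiv:math/0604311 — 2 statements merged into one kernel-verified Lean document; each statement's English description precedes it below -/
import Mathlib

section
/- Let T > 0, 0 < δ < 1, and let f : [0,T] → ℝ be a measurable function satisfying δ·t ≤ f(t) ≤ δ⁻¹·t for all t ∈ [0,T]. If U is uniformly distributed on [0,T], then the variance of f(U) satisfies Var(f(U)) ≥ δ⁴·T²/64. -/
open MeasureTheory ProbabilityTheory Set

/-! The mean of `f` under the uniform law on `[0, T]` is at least `δ T / 2`, whereas on
`[0, δ² T / 4]`, an event of probability `δ² / 4`, the bound `f t ≤ δ⁻¹ t` keeps `f` below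
`δ T / 4`. So `f` deviates from its mean by at least `δ T / 4` with probability at least
`δ² / 4`, and Chebyshev's inequality gives `Var f ≥ (δ T / 4)² · δ² / 4`. -/

section UniformIcc

variable {a b : ℝ}

lemma isProbabilityMeasure_volume_cond_Icc (hab : a < b) :
    IsProbabilityMeasure (volume[|Icc a b]) :=
  cond_isProbabilityMeasure_of_finite (by simp [hab]) (by simp)

lemma measureReal_volume_cond_Icc_Icc (hab : a < b) {c : ℝ} (hc : c ∈ Icc a b) :
    (volume[|Icc a b]).real (Icc a c) = (c - a) / (b - a) := by
  rw [measureReal_def, cond_apply measurableSet_Icc, Icc_inter_Icc, max_self,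
    min_eq_right hc.2, Real.volume_Icc, Real.volume_Icc, ENNReal.toReal_mul, ENNReal.toReal_inv,
    ENNReal.toReal_ofReal (sub_nonneg.2 hab.le), ENNReal.toReal_ofReal (sub_nonneg.2 hc.1),
    inv_mul_eq_div]

lemma Continuous.integrable_volume_cond_Icc (hab : a < b) {g : ℝ → ℝ} (hg : Continuous g) :
    Integrable g (volume[|Icc a b]) :=
  hg.integrableOn_Icc.smul_measure (by simp [hab])

lemma integral_id_volume_cond_Icc (hab : a < b) :
    ∫ x, x ∂volume[|Icc a b] = (a + b) / 2 := by
  rw [ProbabilityTheory.cond, integral_smul_measure, integral_Icc_eq_integral_Ioc,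
    ← intervalIntegral.integral_of_le hab.le, integral_id, Real.volume_Icc, ENNReal.toReal_inv,
    ENNReal.toReal_ofReal (sub_nonneg.2 hab.le), smul_eq_mul]
  field_simp [(sub_pos.2 hab).ne']
  ring

end UniformIcc

lemma sq_mul_measureReal_le_variance {Ω : Type*} [MeasurableSpace Ω] {μ : Measure Ω}
    [IsFiniteMeasure μ] {X : Ω → ℝ} (hX : MemLp X 2 μ) {c : ℝ} (hc : 0 < c) {s : Set Ω}
    (hs : ∀ ω ∈ s, c ≤ |X ω - μ[X]|) :
    c ^ 2 * μ.real s ≤ variance X μ := by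
  have hμs : μ.real s ≤ variance X μ / c ^ 2 :=
    ENNReal.toReal_le_of_le_ofReal (div_nonneg (variance_nonneg X μ) (sq_nonneg c))
      ((measure_mono hs).trans (meas_ge_le_variance_div_sq hX hc))
  rwa [le_div_iff₀ (by positivity), mul_comm] at hμs

section Squeeze

variable {T δ : ℝ} {f : ℝ → ℝ}

lemma sq_le_one_of_mul_le_inv_mul {t : ℝ} (ht : 0 < t) (hδ : 0 < δ)
    (h : δ * t ≤ δ⁻¹ * t) : δ ^ 2 ≤ 1 := by
  nlinarith [mul_inv_cancel₀ hδ.ne']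

lemma memLp_two_volume_cond_Icc_of_squeeze (hδ : 0 < δ) (hf : Measurable f)
    (hlb : ∀ t ∈ Icc (0:ℝ) T, δ * t ≤ f t)
    (hub : ∀ t ∈ Icc (0:ℝ) T, f t ≤ δ⁻¹ * t) :
    MemLp f 2 (volume[|Icc 0 T]) := by
  refine .of_bound hf.aestronglyMeasurable (δ⁻¹ * T)
    (ae_cond_of_forall_mem measurableSet_Icc fun x hx ↦ ?_)
  rw [Real.norm_of_nonneg ((mul_nonneg hδ.le hx.1).trans (hlb x hx))]
  exact (hub x hx).trans (mul_le_mul_of_nonneg_left hx.2 (inv_nonneg.2 hδ.le))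

lemma mul_div_two_le_integral_volume_cond_Icc (hT : 0 < T)
    (hf : Integrable f (volume[|Icc 0 T])) (hlb : ∀ t ∈ Icc (0:ℝ) T, δ * t ≤ f t) :
    δ * T / 2 ≤ ∫ x, f x ∂volume[|Icc 0 T] := calc
  δ * T / 2 = ∫ x, δ * x ∂volume[|Icc 0 T] := by
    rw [integral_const_mul, integral_id_volume_cond_Icc hT]; ring
  _ ≤ ∫ x, f x ∂volume[|Icc 0 T] :=
    integral_mono_ae ((continuous_const_mul δ).integrable_volume_cond_Icc hT) hf
      (ae_cond_of_forall_mem measurableSet_Icc hlb)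

lemma mul_div_four_le_abs_sub_of_le_inv_mul (hδ : 0 < δ) (hδT : δ ^ 2 * T / 4 ≤ T)
    (hub : ∀ t ∈ Icc (0:ℝ) T, f t ≤ δ⁻¹ * t) {m : ℝ} (hm : δ * T / 2 ≤ m) :
    ∀ x ∈ Icc 0 (δ ^ 2 * T / 4), δ * T / 4 ≤ |f x - m| := by
  intro x hx
  have hfx : f x ≤ δ * T / 4 := calc
    f x ≤ δ⁻¹ * x := hub x (Icc_subset_Icc le_rfl hδT hx)
    _ ≤ δ⁻¹ * (δ ^ 2 * T / 4) := by gcongr; exact hx.2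
    _ = δ * T / 4 := by field_simp
  rw [abs_sub_comm]
  exact le_abs.2 (.inl (by linarith))

end Squeeze

theorem variance_lower_bound_of_squeeze_general
    (T δ : ℝ) (hT : 0 < T) (hδ : 0 < δ)
    (f : ℝ → ℝ) (hf : Measurable f)
    (hlb : ∀ t ∈ Icc (0:ℝ) T, δ * t ≤ f t)
    (hub : ∀ t ∈ Icc (0:ℝ) T, f t ≤ δ⁻¹ * t) :
    δ ^ 4 * T ^ 2 / 64 ≤
      variance f ((ENNReal.ofReal T)⁻¹ • volume.restrict (Icc (0:ℝ) T)) := by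
  have hμ : (ENNReal.ofReal T)⁻¹ • volume.restrict (Icc (0:ℝ) T) = volume[|Icc 0 T] := by
    rw [ProbabilityTheory.cond, Real.volume_Icc, sub_zero]
  rw [hμ]
  have hT_mem : T ∈ Icc 0 T := right_mem_Icc.2 hT.le
  have hδ_sq : δ ^ 2 ≤ 1 :=
    sq_le_one_of_mul_le_inv_mul hT hδ ((hlb T hT_mem).trans (hub T hT_mem))
  have hs_mem : δ ^ 2 * T / 4 ∈ Icc 0 T := ⟨by positivity, by nlinarith⟩
  have hL2 := memLp_two_volume_cond_Icc_of_squeeze hδ hf hlb hub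
  have hmean := mul_div_two_le_integral_volume_cond_Icc hT (hL2.integrable one_le_two) hlb
  calc δ ^ 4 * T ^ 2 / 64
        = (δ * T / 4) ^ 2 * (volume[|Icc 0 T]).real (Icc 0 (δ ^ 2 * T / 4)) := by
        rw [measureReal_volume_cond_Icc_Icc hT hs_mem, sub_zero, sub_zero]; field_simp; ring
    _ ≤ variance f (volume[|Icc 0 T]) := sq_mul_measureReal_le_variance hL2 (by positivity)
        (mul_div_four_le_abs_sub_of_le_inv_mul hδ hs_mem.2 hub hmean)

/-- variance lower bound for a function squeezed between `δ t` and `δ⁻¹ t`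
under the uniform distribution on `[0, T]`. -/
theorem variance_lower_bound_of_squeeze
    (T δ : ℝ) (hT : 0 < T) (hδ : 0 < δ) (hδ1 : δ < 1)
    (f : ℝ → ℝ) (hf : Measurable f)
    (hlb : ∀ t ∈ Icc (0:ℝ) T, δ * t ≤ f t)
    (hub : ∀ t ∈ Icc (0:ℝ) T, f t ≤ δ⁻¹ * t) :
    δ ^ 4 * T ^ 2 / 64 ≤
      variance f ((ENNReal.ofReal T)⁻¹ • volume.restrict (Icc (0:ℝ) T)) :=
  variance_lower_bound_of_squeeze_general T δ hT hδ f hf hlb hub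
end

section
/- Let X be a Lévy process on ℝ with X₀ = 0 such that E[e^{pX_t}] = e^{tΨ(p)} < ∞ for all p ∈ ℝ, where Ψ is the Laplace exponent. Then for every p ≥ 1 there is a constant K = K(p,T) such that P(inf_{0≤t≤T} X_t ≤ log ε) ≤ K·ε^p for all sufficiently small ε > 0; consequently for S_t = S₀ e^{X_t}, P(inf_{0≤t≤T} S_t ≤ ε) = o(ε^q) as ε → 0 for every q < p, for every p, i.e. the running infimum of S has all negative moments. -/
/-!
Right-continuity of the paths reduces the event `inf_{[0,T]} X < c` to a countable union over
(clamped) rational times, hence to finite sets of times. For a finite set `F`, split according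
to the first time `t ∈ F` with `X t < c`: the increment `X T - X t` is independent of that event
and, by stationarity and the exponential Chebyshev inequality with `p = 1`, stays below
`a = T |Ψ 1| + log 2` with probability at least `1/2`. This gives the reflection-type bound
`P(min_F X < c) ≤ 2 P(X T < c + a)`, and the exponential Chebyshev inequality with `-p` bounds
`P(X T < log ε + a)` by `e^{T Ψ(-p)} (e^a ε)^p`.
-/

open MeasureTheory ProbabilityTheory Set Filter
open scoped ENNReal

section FirstPassage

variable {ι Ω : Type*} [LinearOrder ι] (X : ι → Ω → ℝ) (F : Finset ι) (c : ℝ)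

def firstBelow (t : ι) : Set Ω :=
  {ω | X t ω < c} ∩ ⋂ u ∈ F, ⋂ (_ : u < t), {ω | c ≤ X u ω}

lemma biUnion_firstBelow :
    ⋃ t ∈ F, firstBelow X F c t = ⋃ t ∈ F, {ω | X t ω < c} := by
  refine Subset.antisymm (iUnion₂_mono fun t _ => inter_subset_left) ?_
  simp only [subset_def, mem_iUnion₂]
  rintro ω ⟨t, htF, hXt⟩
  obtain ⟨t₀, ht₀, hmin⟩ :=
    (F.filter (X · ω < c)).exists_min_image id ⟨t, Finset.mem_filter.2 ⟨htF, hXt⟩⟩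
  rw [Finset.mem_filter] at ht₀
  refine ⟨t₀, ht₀.1, ht₀.2, ?_⟩
  simp only [mem_iInter]
  intro u huF hut
  by_contra hXu
  exact (hmin u (Finset.mem_filter.2 ⟨huF, not_le.1 hXu⟩)).not_gt hut

lemma pairwiseDisjoint_firstBelow : (F : Set ι).PairwiseDisjoint (firstBelow X F c) := by
  have key : ∀ t ∈ F, ∀ t', t < t' → Disjoint (firstBelow X F c t) (firstBelow X F c t') := by
    refine fun t htF t' htt' => disjoint_left.2 fun ω hωt hωt' => ?_
    have hct : c ≤ X t ω := mem_iInter.1 (mem_iInter₂.1 hωt'.2 t htF) htt'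
    exact hct.not_gt hωt.1
  intro t htF t' ht'F hne
  rcases hne.lt_or_gt with h | h
  exacts [key t htF t' h, (key t' ht'F t h).symm]

lemma measurableSet_firstBelow [MeasurableSpace Ω] (t : ι) :
    MeasurableSet[⨆ u ∈ Iic t, MeasurableSpace.comap (X u) inferInstance]
      (firstBelow X F c t) := by
  have hmeas : ∀ u ≤ t,
      Measurable[⨆ u ∈ Iic t, MeasurableSpace.comap (X u) inferInstance] (X u) := fun u hu =>
    (comap_measurable (X u)).mono
      (le_iSup₂ (f := fun u (_ : u ∈ Iic t) => MeasurableSpace.comap (X u) inferInstance) u hu)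
      le_rfl
  refine (hmeas t le_rfl measurableSet_Iio).inter
    (.biInter F.countable_toSet fun u _ => .iInter fun hut => ?_)
  exact hmeas u hut.le measurableSet_Ici

end FirstPassage

theorem measure_biUnion_lt_mul_le {ι Ω : Type*} [LinearOrder ι] [MeasurableSpace Ω]
    {μ : Measure Ω} {X : ι → Ω → ℝ} (hX : ∀ t, Measurable (X t)) {F : Finset ι} {T : ι}
    {a c : ℝ} {β : ℝ≥0∞}
    (hindep : ∀ t ∈ F, Indep (⨆ u ∈ Iic t, MeasurableSpace.comap (X u) inferInstance)
      (MeasurableSpace.comap (fun ω => X T ω - X t ω) inferInstance) μ)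
    (hβ : ∀ t ∈ F, β ≤ μ {ω | X T ω - X t ω ≤ a}) :
    μ (⋃ t ∈ F, {ω | X t ω < c}) * β ≤ μ {ω | X T ω < c + a} := by
  set A := firstBelow X F c
  set D : ι → Set Ω := fun t => {ω | X T ω - X t ω ≤ a}
  have hD : ∀ t, MeasurableSet[MeasurableSpace.comap (fun ω => X T ω - X t ω) inferInstance]
      (D t) := fun t => ⟨Iic a, measurableSet_Iic, rfl⟩
  have hA : ∀ t, MeasurableSet (A t) := fun t =>
    iSup₂_le (fun u _ => (hX u).comap_le) _ (measurableSet_firstBelow X F c t)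
  have hAD : ∀ t, MeasurableSet (A t ∩ D t) := fun t =>
    (hA t).inter (((hX T).sub (hX t)) measurableSet_Iic)
  calc μ (⋃ t ∈ F, {ω | X t ω < c}) * β
      = ∑ t ∈ F, μ (A t) * β := by
        rw [← biUnion_firstBelow, measure_biUnion_finset (pairwiseDisjoint_firstBelow X F c)
          fun t _ => hA t, Finset.sum_mul]
    _ ≤ ∑ t ∈ F, μ (A t ∩ D t) := by
        gcongr with t htF
        rw [(Indep_iff _ _ μ).1 (hindep t htF) _ _ (measurableSet_firstBelow X F c t) (hD t)]
        gcongr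
        exact hβ t htF
    _ = μ (⋃ t ∈ F, A t ∩ D t) :=
        (measure_biUnion_finset ((pairwiseDisjoint_firstBelow X F c).mono
          fun _ => inter_subset_left) fun t _ => hAD t).symm
    _ ≤ μ {ω | X T ω < c + a} := by
        refine measure_mono (iUnion₂_subset fun t _ ω ⟨hωA, hωD⟩ => ?_)
        show X T ω < c + a
        linarith [show X t ω < c from hωA.1, show X T ω - X t ω ≤ a from hωD]

theorem measure_iUnion_le_of_forall_finset {ι Ω : Type*} [Countable ι] [MeasurableSpace Ω]
    {μ : Measure Ω} {E : ι → Set Ω} {b : ℝ≥0∞} (h : ∀ F : Finset ι, μ (⋃ i ∈ F, E i) ≤ b) :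
    μ (⋃ i, E i) ≤ b := by
  have hmono : Monotone fun F : Finset ι => ⋃ i ∈ F, E i := fun _ _ hFG =>
    biUnion_subset_biUnion_left hFG
  rw [iUnion_eq_iUnion_finset, hmono.measure_iUnion]
  exact iSup_le h

lemma exists_rat_projIcc_lt_of_continuousWithinAt {f : ℝ → ℝ} {T t c : ℝ} (hT : 0 ≤ T)
    (hf : ContinuousWithinAt f (Ici t) t) (ht : t ∈ Icc 0 T) (hft : f t < c) :
    ∃ q : ℚ, f (projIcc 0 T hT q) < c := by
  obtain ⟨δ, hδ, hball⟩ := Metric.mem_nhdsWithin_iff.1 (hf (isOpen_Iio.mem_nhds hft))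
  obtain ⟨q, htq, hqδ⟩ := exists_rat_btwn (lt_add_of_pos_right t hδ)
  refine ⟨q, hball ⟨?_, ?_⟩⟩
  · rw [coe_projIcc, Metric.mem_ball, Real.dist_eq, abs_lt]
    constructor
    · linarith [le_max_of_le_right (le_min ht.2 htq.le) (b := (0 : ℝ))]
    · have : max 0 (min T (q : ℝ)) ≤ q := max_le (ht.1.trans htq.le) (min_le_right _ _)
      linarith
  · rw [coe_projIcc]
    exact le_max_of_le_right (le_min ht.2 htq.le)

section LevyProcess

variable {Ω : Type*} [MeasurableSpace Ω] (P : Measure Ω) (X : ℝ → Ω → ℝ)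

def HasStationaryIncrements : Prop :=
  ∀ s t : ℝ, 0 ≤ s → 0 ≤ t →
    Measure.map (fun ω => X (s + t) ω - X s ω) P = Measure.map (X t) P

def HasIndependentIncrements : Prop :=
  ∀ s t : ℝ, 0 ≤ s → s ≤ t →
    Indep (⨆ u ∈ Iic s, MeasurableSpace.comap (X u) inferInstance)
      (MeasurableSpace.comap (fun ω => X t ω - X s ω) inferInstance) P

def HasLaplaceExponent (Ψ : ℝ → ℝ) : Prop :=
  ∀ p t : ℝ, 0 ≤ t →
    Integrable (fun ω => Real.exp (p * X t ω)) P ∧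
      ∫ ω, Real.exp (p * X t ω) ∂P = Real.exp (t * Ψ p)

variable {P X}

lemma HasStationaryIncrements.measure_sub_le (h : HasStationaryIncrements P X)
    (hX : ∀ t, Measurable (X t)) {t T : ℝ} (ht : t ∈ Icc 0 T) (a : ℝ) :
    P {ω | X T ω - X t ω ≤ a} = P {ω | X (T - t) ω ≤ a} := by
  have hmap := h t (T - t) ht.1 (sub_nonneg.2 ht.2)
  rw [add_sub_cancel] at hmap
  calc P {ω | X T ω - X t ω ≤ a}
      = P.map (fun ω => X T ω - X t ω) (Iic a) :=
        (Measure.map_apply ((hX T).sub (hX t)) measurableSet_Iic).symm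
    _ = P {ω | X (T - t) ω ≤ a} := by rw [hmap, Measure.map_apply (hX _) measurableSet_Iic]; rfl

variable [IsProbabilityMeasure P] {Ψ : ℝ → ℝ}

lemma HasLaplaceExponent.measureReal_lt_log_le (hΨ : HasLaplaceExponent P X Ψ) {t p ε : ℝ}
    (ht : 0 ≤ t) (hp : 0 ≤ p) (hε : 0 < ε) :
    P.real {ω | X t ω < Real.log ε} ≤ Real.exp (t * Ψ (-p)) * ε ^ p := by
  obtain ⟨hint, hmgf⟩ := hΨ (-p) t ht
  calc P.real {ω | X t ω < Real.log ε}
      ≤ P.real {ω | X t ω ≤ Real.log ε} := measureReal_mono fun _ h => le_of_lt (α := ℝ) h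
    _ ≤ Real.exp (-(-p) * Real.log ε) * mgf (X t) P (-p) :=
        measure_le_le_exp_mul_mgf _ (neg_nonpos.2 hp) hint
    _ = Real.exp (t * Ψ (-p)) * ε ^ p := by
        rw [mgf, hmgf, Real.rpow_def_of_pos hε, neg_neg, mul_comm p, mul_comm]

lemma HasLaplaceExponent.inv_two_le_measure_le (hΨ : HasLaplaceExponent P X Ψ) {s T : ℝ}
    (hs : s ∈ Icc 0 T) : 2⁻¹ ≤ P {ω | X s ω ≤ T * |Ψ 1| + Real.log 2} := by
  set a := T * |Ψ 1| + Real.log 2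
  obtain ⟨hint, hmgf⟩ := hΨ 1 s hs.1
  have hupper : P.real {ω | a ≤ X s ω} ≤ 2⁻¹ := by
    have hsΨ : s * Ψ 1 ≤ T * |Ψ 1| :=
      (mul_le_mul_of_nonneg_left (le_abs_self _) hs.1).trans
        (mul_le_mul_of_nonneg_right hs.2 (abs_nonneg _))
    calc P.real {ω | a ≤ X s ω} ≤ Real.exp (-1 * a) * mgf (X s) P 1 :=
          measure_ge_le_exp_mul_mgf a zero_le_one hint
      _ = Real.exp (s * Ψ 1 - a) := by rw [mgf, hmgf, ← Real.exp_add]; ring_nf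
      _ ≤ Real.exp (-Real.log 2) := Real.exp_le_exp.2 (by linarith)
      _ = 2⁻¹ := by rw [Real.exp_neg, Real.exp_log two_pos]
  have hcover : (1 : ℝ≥0∞) ≤ P {ω | X s ω ≤ a} + P {ω | a ≤ X s ω} := by
    rw [← measure_univ (μ := P)]
    refine (measure_mono fun ω _ => ?_).trans (measure_union_le _ _)
    exact (le_total (X s ω) a).imp id id
  calc (2⁻¹ : ℝ≥0∞) = 1 - 2⁻¹ := ENNReal.one_sub_inv_two.symm
    _ ≤ 1 - P {ω | a ≤ X s ω} := by
        gcongr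
        rw [← ofReal_measureReal]
        exact ENNReal.ofReal_le_of_le_toReal (by simpa using hupper)
    _ ≤ P {ω | X s ω ≤ a} := tsub_le_iff_right.2 hcover

theorem measure_exists_lt_le_two_mul (hX : ∀ t, Measurable (X t))
    (hrc : ∀ ω t, ContinuousWithinAt (fun s => X s ω) (Ici t) t)
    (hstat : HasStationaryIncrements P X) (hindep : HasIndependentIncrements P X)
    (hΨ : HasLaplaceExponent P X Ψ) {T : ℝ} (hT : 0 ≤ T) (c : ℝ) :
    P {ω | ∃ t ∈ Icc 0 T, X t ω < c} ≤ 2 * P {ω | X T ω < c + (T * |Ψ 1| + Real.log 2)} := by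
  set τ : ℚ → ℝ := fun q => projIcc 0 T hT q
  have hrat : {ω | ∃ t ∈ Icc 0 T, X t ω < c} ⊆ ⋃ q, {ω | X (τ q) ω < c} := by
    rintro ω ⟨t, ht, hXt⟩
    exact mem_iUnion.2 (exists_rat_projIcc_lt_of_continuousWithinAt hT (hrc ω t) ht hXt)
  refine (measure_mono hrat).trans (measure_iUnion_le_of_forall_finset fun F => ?_)
  have hτ : ∀ t ∈ F.image τ, t ∈ Icc 0 T := by
    simp only [Finset.mem_image]
    rintro _ ⟨q, -, rfl⟩
    exact (projIcc 0 T hT q).2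
  have hhalf : ∀ t ∈ F.image τ, 2⁻¹ ≤ P {ω | X T ω - X t ω ≤ T * |Ψ 1| + Real.log 2} := by
    intro t ht
    rw [hstat.measure_sub_le hX (hτ t ht)]
    exact hΨ.inv_two_le_measure_le ⟨sub_nonneg.2 (hτ t ht).2, by linarith [(hτ t ht).1]⟩
  have hmax := measure_biUnion_lt_mul_le hX (c := c)
    (fun t ht => hindep t T (hτ t ht).1 (hτ t ht).2) hhalf
  rw [Finset.set_biUnion_finset_image, ENNReal.mul_inv_le_iff two_ne_zero ENNReal.ofNat_ne_top]
    at hmax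
  rwa [mul_comm]

theorem exists_measureReal_exists_lt_log_le (hX : ∀ t, Measurable (X t))
    (hrc : ∀ ω t, ContinuousWithinAt (fun s => X s ω) (Ici t) t)
    (hstat : HasStationaryIncrements P X) (hindep : HasIndependentIncrements P X)
    (hΨ : HasLaplaceExponent P X Ψ) {T p : ℝ} (hT : 0 ≤ T) (hp : 0 ≤ p) :
    ∃ K > (0 : ℝ), ∀ ε > 0, P.real {ω | ∃ t ∈ Icc 0 T, X t ω < Real.log ε} ≤ K * ε ^ p := by
  set a := T * |Ψ 1| + Real.log 2
  refine ⟨2 * Real.exp (T * Ψ (-p)) * Real.exp a ^ p, by positivity, fun ε hε => ?_⟩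
  have hshift : Real.log ε + a = Real.log (Real.exp a * ε) := by
    rw [Real.log_mul (Real.exp_pos a).ne' hε.ne', Real.log_exp, add_comm]
  calc P.real {ω | ∃ t ∈ Icc 0 T, X t ω < Real.log ε}
      ≤ 2 * P.real {ω | X T ω < Real.log ε + a} := by
        simpa [measureReal_def] using ENNReal.toReal_mono (by finiteness)
          (measure_exists_lt_le_two_mul hX hrc hstat hindep hΨ hT (Real.log ε))
    _ ≤ 2 * (Real.exp (T * Ψ (-p)) * (Real.exp a * ε) ^ p) := by
        rw [hshift]
        gcongr
        exact hΨ.measureReal_lt_log_le hT hp (by positivity)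
    _ = 2 * Real.exp (T * Ψ (-p)) * Real.exp a ^ p * ε ^ p := by
        rw [Real.mul_rpow (Real.exp_pos a).le hε.le]
        ring

end LevyProcess

section RunningInfimum

variable {Ω : Type*} [MeasurableSpace Ω] {P : Measure Ω} [IsFiniteMeasure P]
  {X : ℝ → Ω → ℝ} {T : ℝ}

theorem exists_measure_sInf_image_le_log_le {K p : ℝ} (hT : 0 ≤ T) (hK : 0 < K)
    (hbound : ∀ ε > 0, P.real {ω | ∃ t ∈ Icc 0 T, X t ω < Real.log ε} ≤ K * ε ^ p) :
    ∃ K' > (0 : ℝ), ∀ ε > 0, P {ω | sInf ((fun t => X t ω) '' Icc 0 T) ≤ Real.log ε} ≤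
      ENNReal.ofReal (K' * ε ^ p) := by
  refine ⟨K * Real.exp 1 ^ p, by positivity, fun ε hε => ?_⟩
  have hsub : {ω | sInf ((fun t => X t ω) '' Icc 0 T) ≤ Real.log ε} ⊆
      {ω | ∃ t ∈ Icc 0 T, X t ω < Real.log (Real.exp 1 * ε)} := by
    intro ω hω
    rw [Real.log_mul (Real.exp_pos 1).ne' hε.ne', Real.log_exp]
    obtain ⟨_, ⟨t, ht, rfl⟩, hlt⟩ := exists_lt_of_csInf_lt ((nonempty_Icc.2 hT).image _)
      (show sInf ((fun t => X t ω) '' Icc 0 T) < 1 + Real.log ε by linarith [hω.out])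
    exact ⟨t, ht, hlt⟩
  calc P {ω | sInf ((fun t => X t ω) '' Icc 0 T) ≤ Real.log ε}
      ≤ ENNReal.ofReal (P.real {ω | ∃ t ∈ Icc 0 T, X t ω < Real.log (Real.exp 1 * ε)}) := by
        rw [ofReal_measureReal]
        exact measure_mono hsub
    _ ≤ ENNReal.ofReal (K * (Real.exp 1 * ε) ^ p) :=
        ENNReal.ofReal_le_ofReal (hbound _ (by positivity))
    _ = ENNReal.ofReal (K * Real.exp 1 ^ p * ε ^ p) := by
        rw [Real.mul_rpow (Real.exp_pos 1).le hε.le, mul_assoc]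

theorem tendsto_measure_sInf_image_exp_le_div_rpow {K q S₀ : ℝ} (hT : 0 ≤ T) (hS₀ : 0 < S₀)
    (hbound : ∀ ε > 0, P.real {ω | ∃ t ∈ Icc 0 T, X t ω < Real.log ε} ≤ K * ε ^ (q + 1)) :
    Tendsto (fun ε : ℝ =>
        (P {ω | sInf ((fun t => S₀ * Real.exp (X t ω)) '' Icc 0 T) ≤ ε}).toReal / ε ^ q)
      (nhdsWithin 0 (Ioi 0)) (nhds 0) := by
  have hle : ∀ ε > 0,
      (P {ω | sInf ((fun t => S₀ * Real.exp (X t ω)) '' Icc 0 T) ≤ ε}).toReal / ε ^ q ≤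
        K * (2 / S₀) ^ (q + 1) * ε := by
    intro ε hε
    have hsub : {ω | sInf ((fun t => S₀ * Real.exp (X t ω)) '' Icc 0 T) ≤ ε} ⊆
        {ω | ∃ t ∈ Icc 0 T, X t ω < Real.log (2 / S₀ * ε)} := by
      intro ω hω
      obtain ⟨_, ⟨t, ht, rfl⟩, hlt⟩ := exists_lt_of_csInf_lt ((nonempty_Icc.2 hT).image _)
        (show sInf ((fun t => S₀ * Real.exp (X t ω)) '' Icc 0 T) < 2 * ε by linarith [hω.out])
      refine ⟨t, ht, (Real.lt_log_iff_exp_lt (by positivity)).2 ?_⟩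
      rw [div_mul_eq_mul_div, lt_div_iff₀ hS₀]
      linarith
    rw [div_le_iff₀ (by positivity)]
    calc (P {ω | sInf ((fun t => S₀ * Real.exp (X t ω)) '' Icc 0 T) ≤ ε}).toReal
        ≤ P.real {ω | ∃ t ∈ Icc 0 T, X t ω < Real.log (2 / S₀ * ε)} := measureReal_mono hsub
      _ ≤ K * (2 / S₀ * ε) ^ (q + 1) := hbound _ (by positivity)
      _ = K * (2 / S₀) ^ (q + 1) * ε * ε ^ q := by
          rw [Real.mul_rpow (by positivity) hε.le, Real.rpow_add_one hε.ne']
          ring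
  have hlim : Tendsto (fun ε : ℝ => K * (2 / S₀) ^ (q + 1) * ε) (nhdsWithin 0 (Ioi 0))
      (nhds 0) := by
    simpa using ((continuous_const_mul (K * (2 / S₀) ^ (q + 1))).tendsto (0 : ℝ)).mono_left
      nhdsWithin_le_nhds
  refine squeeze_zero' (eventually_nhdsWithin_of_forall fun ε hε => ?_)
    (eventually_nhdsWithin_of_forall hle) hlim
  exact div_nonneg ENNReal.toReal_nonneg (Real.rpow_nonneg (le_of_lt hε) q)

end RunningInfimum

theorem levy_running_infimum_moments_general
    {Ω : Type*} [MeasurableSpace Ω] (P : Measure Ω) [IsProbabilityMeasure P]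
    (X : ℝ → Ω → ℝ) (Ψ : ℝ → ℝ) (S₀ T : ℝ) (hS₀ : 0 < S₀) (hT : 0 < T)
    (hmeas : ∀ t, Measurable (X t))
    (hrc : ∀ ω t, ContinuousWithinAt (fun s => X s ω) (Ici t) t)
    (hstat : ∀ s t : ℝ, 0 ≤ s → 0 ≤ t →
      Measure.map (fun ω => X (s + t) ω - X s ω) P = Measure.map (X t) P)
    (hindep : ∀ s t : ℝ, 0 ≤ s → s ≤ t →
      Indep (⨆ u ∈ Iic s, MeasurableSpace.comap (X u) inferInstance)
        (MeasurableSpace.comap (fun ω => X t ω - X s ω) inferInstance) P)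
    (hexp : ∀ (p : ℝ) (t : ℝ), 0 ≤ t →
      Integrable (fun ω => Real.exp (p * X t ω)) P ∧
      ∫ ω, Real.exp (p * X t ω) ∂P = Real.exp (t * Ψ p)) :
    (∀ p : ℝ, 1 ≤ p → ∃ K > (0:ℝ), ∃ ε₀ > (0:ℝ), ∀ ε : ℝ, 0 < ε → ε < ε₀ →
      P {ω | sInf ((fun t => X t ω) '' Icc 0 T) ≤ Real.log ε} ≤
        ENNReal.ofReal (K * ε ^ p)) ∧
    (∀ p : ℝ, 1 ≤ p → ∀ q : ℝ, 0 ≤ q → q < p →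
      Tendsto (fun ε : ℝ =>
          (P {ω | sInf ((fun t => S₀ * Real.exp (X t ω)) '' Icc 0 T) ≤ ε}).toReal / ε ^ q)
        (nhdsWithin 0 (Ioi 0)) (nhds 0)) := by
  have htail : ∀ p : ℝ, 0 ≤ p → ∃ K > (0 : ℝ), ∀ ε > 0,
      P.real {ω | ∃ t ∈ Icc 0 T, X t ω < Real.log ε} ≤ K * ε ^ p := fun p hp =>
    exists_measureReal_exists_lt_log_le hmeas hrc hstat hindep hexp hT.le hp
  refine ⟨fun p hp => ?_, fun _ _ q _ _ => ?_⟩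
  · obtain ⟨K, hK, hbound⟩ := htail p (by linarith)
    obtain ⟨K', hK', hinf⟩ := exists_measure_sInf_image_le_log_le hT.le hK hbound
    exact ⟨K', hK', 1, one_pos, fun ε hε _ => hinf ε hε⟩
  · obtain ⟨K, -, hbound⟩ := htail (q + 1) (by linarith)
    exact tendsto_measure_sInf_image_exp_le_div_rpow hT.le hS₀ hbound

/-- for a Lévy process with all exponential moments
`E[e^{pX_t}] = e^{tΨ(p)}`, the running infimum satisfies
`P(inf_{t≤T} X_t ≤ log ε) ≤ K ε^p` for small `ε`, and for `S_t = S₀ e^{X_t}`,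
`P(inf_{t≤T} S_t ≤ ε) = o(ε^q)` for every `q < p`, for every `p ≥ 1`. -/
theorem levy_running_infimum_moments
    {Ω : Type*} [MeasurableSpace Ω] (P : Measure Ω) [IsProbabilityMeasure P]
    (X : ℝ → Ω → ℝ) (Ψ : ℝ → ℝ) (S₀ T : ℝ) (hS₀ : 0 < S₀) (hT : 0 < T)
    (hX0 : ∀ ω, X 0 ω = 0)
    (hmeas : ∀ t, Measurable (X t))
    (hrc : ∀ ω t, ContinuousWithinAt (fun s => X s ω) (Ici t) t)
    (hll : ∀ ω t, ∃ l : ℝ, Tendsto (fun s => X s ω) (nhdsWithin t (Iio t)) (nhds l))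
    (hstat : ∀ s t : ℝ, 0 ≤ s → 0 ≤ t →
      Measure.map (fun ω => X (s + t) ω - X s ω) P = Measure.map (X t) P)
    (hindep : ∀ s t : ℝ, 0 ≤ s → s ≤ t →
      Indep (⨆ u ∈ Iic s, MeasurableSpace.comap (X u) inferInstance)
        (MeasurableSpace.comap (fun ω => X t ω - X s ω) inferInstance) P)
    (hexp : ∀ (p : ℝ) (t : ℝ), 0 ≤ t →
      Integrable (fun ω => Real.exp (p * X t ω)) P ∧
      ∫ ω, Real.exp (p * X t ω) ∂P = Real.exp (t * Ψ p)) :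
    (∀ p : ℝ, 1 ≤ p → ∃ K > (0:ℝ), ∃ ε₀ > (0:ℝ), ∀ ε : ℝ, 0 < ε → ε < ε₀ →
      P {ω | sInf ((fun t => X t ω) '' Icc 0 T) ≤ Real.log ε} ≤
        ENNReal.ofReal (K * ε ^ p)) ∧
    (∀ p : ℝ, 1 ≤ p → ∀ q : ℝ, 0 ≤ q → q < p →
      Tendsto (fun ε : ℝ =>
          (P {ω | sInf ((fun t => S₀ * Real.exp (X t ω)) '' Icc 0 T) ≤ ε}).toReal / ε ^ q)
        (nhdsWithin 0 (Ioi 0)) (nhds 0)) :=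
  levy_running_infimum_moments_general P X Ψ S₀ T hS₀ hT hmeas hrc hstat hindep hexp
end
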